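/- arXiv:math/0404497 — 3 statements merged into one kernel-verified Lean document; each statement's English description precedes it below -/
import Mathlib

section
/- Let ε_Σ, ε_Δ, ε_Γ, η be positive reals and r_Γ > 0 with r_Γ < 1/η, ε_Σ < 1/2, ε_Δ < 1. Define the three closed families Σ' = [-1, ε_Σ] × {|w| ≤ 2}, Δ' = {|z| ≤ 1/2} × [-ε_Δ, 1] (identifying a real interval with the corresponding set of real points in ℂ), and Γ' = {(ξ + iηξ², ξ - il) : |ξ| ≤ r_Γ, l ∈ [-ε_Γ, ε_Γ]}. Then every point of Σ' ∩ Δ' ∩ Γ' is of the form Γ_y(ξ) with ξ = x + iy, x² = y² - y/η, -ε_Γ ≤ y ≤ 0, and |ξ| ≤ r_Γ. -/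
open Complex

/-- Every point of Σ' ∩ Δ' ∩ Γ' is of the form Γ_y(ξ), ξ = x + iy, with
x² = y² - y/η, -ε_Γ ≤ y ≤ 0 and |ξ| ≤ r_Γ. -/
theorem stmt_6 (epsS epsD epsG η rΓ : ℝ)
    (hS0 : 0 < epsS) (hD0 : 0 < epsD) (hG0 : 0 < epsG) (hη : 0 < η)
    (hr0 : 0 < rΓ) (hr : rΓ < 1/η) (hS : epsS < 1/2) (hD : epsD < 1) :
    ∀ p : ℂ × ℂ,
      p ∈ {p : ℂ × ℂ | p.1.im = 0 ∧ -1 ≤ p.1.re ∧ p.1.re ≤ epsS ∧ ‖p.2‖ ≤ 2} →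
      p ∈ {p : ℂ × ℂ | ‖p.1‖ ≤ 1/2 ∧ p.2.im = 0 ∧ -epsD ≤ p.2.re ∧ p.2.re ≤ 1} →
      p ∈ {p : ℂ × ℂ | ∃ ξ : ℂ, ∃ l : ℝ, ‖ξ‖ ≤ rΓ ∧ |l| ≤ epsG ∧
            p = (ξ + I * η * ξ ^ 2, ξ - I * l)} →
      ∃ ξ : ℂ, ‖ξ‖ ≤ rΓ ∧ -epsG ≤ ξ.im ∧ ξ.im ≤ 0 ∧
        ξ.re ^ 2 = ξ.im ^ 2 - ξ.im / η ∧
        p = (ξ + I * η * ξ ^ 2, ξ - I * ξ.im) := by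
  rintro p ⟨h1im, -, -, -⟩ ⟨-, h2im, -, -⟩ ⟨ξ, l, hξ, hl, hp⟩
  have hp1 : p.1 = ξ + I * η * ξ ^ 2 := by rw [hp]
  have hp2 : p.2 = ξ - I * l := by rw [hp]
  have hlξ : l = ξ.im := by
    have := h2im
    rw [hp2] at this
    simp [Complex.sub_im, Complex.mul_im] at this
    linarith
  have him : ξ.im + η * (ξ.re ^ 2 - ξ.im ^ 2) = 0 := by
    have := h1im
    rw [hp1] at this
    simp [Complex.add_im, Complex.mul_im, Complex.mul_re, sq] at this
    ring_nf at this ⊢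
    linarith
  have heq : ξ.re ^ 2 = ξ.im ^ 2 - ξ.im / η := by
    field_simp
    nlinarith [him]
  have hyabs : |ξ.im| ≤ rΓ := (Complex.abs_im_le_norm ξ).trans hξ
  have hy0 : ξ.im ≤ 0 := by
    by_contra hpos
    push_neg at hpos
    have h1 : ξ.im < 1/η := lt_of_le_of_lt (le_trans (le_abs_self _) hyabs) hr
    have h2 : ξ.im * η < 1 := (lt_div_iff₀ hη).mp h1
    nlinarith [sq_nonneg ξ.re, him, mul_pos hpos hpos]
  refine ⟨ξ, hξ, ?_, hy0, heq, ?_⟩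
  · have := abs_le.mp hl
    rw [hlξ] at this
    exact this.1
  · rw [hp, hlξ]
end

section
/- Let V₁ = U₁ ∩ B³(0,6) and V₂ = U₂ ∩ B³(0,6), where B³(0,6) is the open Euclidean ball of radius 6 in ℂ³ and U₁, U₂ are as in the ℂ³ example. Then V₁ ∩ V₂ = ∅, (Ũ₁ ∩ B³(0,6)) ∩ V₂ = ∅, (Ũ₂ ∩ B³(0,6)) ∩ V₁ = ∅, and (Ũ₁ ∩ B³(0,6)) ∩ (Ũ₂ ∩ B³(0,6)) ≠ ∅. -/
/-- With V₁ = U₁ ∩ B³(0,6), V₂ = U₂ ∩ B³(0,6): V₁ ∩ V₂ = ∅, (E₁ ∩ B) ∩ V₂ = ∅,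
(E₂ ∩ B) ∩ V₁ = ∅, but (E₁ ∩ B) ∩ (E₂ ∩ B) ≠ ∅. -/
theorem stmt_14 :
    let U₁ : Set (ℂ × ℂ × ℂ) :=
      {p | ‖p.1‖ < 8 ∧ (1/2 < ‖p.2.1‖ ∧ ‖p.2.1‖ < 1) ∧
            ‖p.2.2‖ < 1/2} ∪
      {p | (1/2 < ‖p.1‖ ∧ ‖p.1‖ < 8) ∧
            (1/2 < ‖p.2.1‖ ∧ ‖p.2.1‖ < 1) ∧ ‖p.2.2‖ < 1}
    let E₁ : Set (ℂ × ℂ × ℂ) :=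
      {p | ‖p.1‖ < 8 ∧ (1/2 < ‖p.2.1‖ ∧ ‖p.2.1‖ < 1) ∧
            ‖p.2.2‖ < 1}
    let U₂ : Set (ℂ × ℂ × ℂ) :=
      {p | ‖p.1‖ < 1/4 ∧ ‖p.2.1‖ < 8 ∧
            (3/2 < ‖p.2.2‖ ∧ ‖p.2.2‖ < 2)} ∪
      {p | ‖p.1‖ < 1/4 ∧ (3/2 < ‖p.2.1‖ ∧ ‖p.2.1‖ < 8) ∧
            (3/4 < ‖p.2.2‖ ∧ ‖p.2.2‖ < 2)}
    let E₂ : Set (ℂ × ℂ × ℂ) :=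
      {p | ‖p.1‖ < 1/4 ∧ ‖p.2.1‖ < 8 ∧
            (3/4 < ‖p.2.2‖ ∧ ‖p.2.2‖ < 2)}
    let B : Set (ℂ × ℂ × ℂ) :=
      {p | ‖p.1‖ ^ 2 + ‖p.2.1‖ ^ 2 + ‖p.2.2‖ ^ 2 < 36}
    (U₁ ∩ B) ∩ (U₂ ∩ B) = ∅ ∧ (E₁ ∩ B) ∩ (U₂ ∩ B) = ∅ ∧
      (E₂ ∩ B) ∩ (U₁ ∩ B) = ∅ ∧ ((E₁ ∩ B) ∩ (E₂ ∩ B)).Nonempty := by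
  intro U₁ E₁ U₂ E₂ B
  have hab : ‖(3/4 : ℂ)‖ = 3/4 ∧ ‖(7/8 : ℂ)‖ = 7/8 := by
    constructor <;> rw [norm_div] <;> simp [Complex.norm_ofNat]
  refine ⟨?_, ?_, ?_, ⟨(0, 3/4, 7/8), ⟨?_, ?_⟩, ?_, ?_⟩⟩
  · ext p
    simp only [Set.mem_inter_iff, Set.mem_union, Set.mem_setOf_eq, Set.mem_empty_iff_false,
      iff_false]
    rintro ⟨⟨(⟨h1, ⟨h2, h3⟩, h4⟩ | ⟨⟨h1, h1'⟩, ⟨h2, h3⟩, h4⟩), -⟩,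
      (⟨g1, g2, g3, g4⟩ | ⟨g1, ⟨g2, g3⟩, g4⟩), -⟩ <;> linarith
  · ext p
    simp only [Set.mem_inter_iff, Set.mem_union, Set.mem_setOf_eq, Set.mem_empty_iff_false,
      iff_false]
    rintro ⟨⟨⟨h1, ⟨h2, h3⟩, h4⟩, -⟩, (⟨g1, g2, g3, g4⟩ | ⟨g1, ⟨g2, g3⟩, g4⟩), -⟩ <;> linarith
  · ext p
    simp only [Set.mem_inter_iff, Set.mem_union, Set.mem_setOf_eq, Set.mem_empty_iff_false,
      iff_false]
    rintro ⟨⟨⟨h1, h2, h3, h4⟩, -⟩,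
      (⟨g1, ⟨g2, g3⟩, g4⟩ | ⟨⟨g1, g1'⟩, ⟨g2, g3⟩, g4⟩), -⟩ <;> linarith
  · show ‖(0 : ℂ)‖ < 8 ∧ (1/2 < ‖(3/4 : ℂ)‖ ∧ ‖(3/4 : ℂ)‖ < 1) ∧
      ‖(7/8 : ℂ)‖ < 1
    rw [norm_zero, hab.1, hab.2]; norm_num
  · show ‖(0 : ℂ)‖ ^ 2 + ‖(3/4 : ℂ)‖ ^ 2 + ‖(7/8 : ℂ)‖ ^ 2 < 36
    rw [norm_zero, hab.1, hab.2]; norm_num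
  · show ‖(0 : ℂ)‖ < 1/4 ∧ ‖(3/4 : ℂ)‖ < 8 ∧
      (3/4 < ‖(7/8 : ℂ)‖ ∧ ‖(7/8 : ℂ)‖ < 2)
    rw [norm_zero, hab.1, hab.2]; norm_num
  · show ‖(0 : ℂ)‖ ^ 2 + ‖(3/4 : ℂ)‖ ^ 2 + ‖(7/8 : ℂ)‖ ^ 2 < 36
    rw [norm_zero, hab.1, hab.2]; norm_num
end

section
/- Every function holomorphic on the Hartogs figure H = (Δ(0,1) × {1/2 < |w| < 1}) ∪ (Δ(0,1/2) × Δ(0,1)) extends to a function holomorphic on the full bidisc Δ(0,1) × Δ(0,1). -/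
open Complex MeasureTheory Metric Set Filter
open scoped Real Topology

namespace Hartogs16

/-- The Hartogs figure. -/
def Hs : Set (ℂ × ℂ) :=
  {p : ℂ × ℂ | ‖p.1‖ < 1 ∧ 1/2 < ‖p.2‖ ∧ ‖p.2‖ < 1} ∪
    {p : ℂ × ℂ | ‖p.1‖ < 1/2 ∧ ‖p.2‖ < 1}

lemma hs_open : IsOpen Hs := by
  have c1 : Continuous fun p : ℂ × ℂ => ‖p.1‖ :=
    continuous_norm.comp continuous_fst
  have c2 : Continuous fun p : ℂ × ℂ => ‖p.2‖ :=
    continuous_norm.comp continuous_snd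
  exact ((isOpen_lt c1 continuous_const).inter
      ((isOpen_lt continuous_const c2).inter (isOpen_lt c2 continuous_const))).union
    ((isOpen_lt c1 continuous_const).inter (isOpen_lt c2 continuous_const))

variable {f : ℂ × ℂ → ℂ}

lemma sliceZ (hf : DifferentiableOn ℂ f Hs) {ζ : ℂ} (h1 : 1/2 < ‖ζ‖)
    (h2 : ‖ζ‖ < 1) : DifferentiableOn ℂ (fun z => f (z, ζ)) (ball (0:ℂ) 1) := by
  have : DifferentiableOn ℂ (f ∘ fun z : ℂ => (z, ζ)) (ball (0:ℂ) 1) := by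
    refine hf.comp ((differentiable_id.prodMk (differentiable_const ζ)).differentiableOn) ?_
    intro z hz
    exact Or.inl ⟨by simpa using mem_ball_zero_iff.1 hz, h1, h2⟩
  exact this

lemma sliceW (hf : DifferentiableOn ℂ f Hs) {z : ℂ} (h : ‖z‖ < 1/2) :
    DifferentiableOn ℂ (fun w => f (z, w)) (ball (0:ℂ) 1) := by
  have : DifferentiableOn ℂ (f ∘ fun w : ℂ => (z, w)) (ball (0:ℂ) 1) := by
    refine hf.comp ((differentiable_const z).prodMk differentiable_id).differentiableOn ?_
    intro w hw
    exact Or.inr ⟨h, by simpa using mem_ball_zero_iff.1 hw⟩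
  exact this

lemma cauchyZ (hf : DifferentiableOn ℂ f Hs) {ρ : ℝ} (hρ2 : ρ < 1) {z ζ : ℂ}
    (hz : ‖z‖ < ρ) (h1 : 1/2 < ‖ζ‖) (h2 : ‖ζ‖ < 1) :
    (∮ ξ in C(0, ρ), (ξ - z)⁻¹ • f (ξ, ζ)) = (2 * π * I) • f (z, ζ) := by
  refine DifferentiableOn.circleIntegral_sub_inv_smul ?_ ?_
  · exact (sliceZ hf h1 h2).mono (closedBall_subset_ball (by linarith))
  · simpa using hz

lemma cauchyW (hf : DifferentiableOn ℂ f Hs) {z w : ℂ} (hz : ‖z‖ < 1/2)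
    (hw : ‖w‖ < 3/4) :
    (∮ ζ in C(0, 3/4), (ζ - w)⁻¹ • f (z, ζ)) = (2 * π * I) • f (z, w) := by
  refine DifferentiableOn.circleIntegral_sub_inv_smul ?_ ?_
  · exact (sliceW hf hz).mono (closedBall_subset_ball (by norm_num))
  · simpa using hw

/-- measure on `(0, 2π]`. -/
noncomputable def mu : Measure ℝ := volume.restrict (Set.Ioc 0 (2*π))

instance : IsFiniteMeasure mu := by
  constructor
  simp only [mu, Measure.restrict_apply, MeasurableSet.univ, Set.univ_inter, Real.volume_Ioc]
  exact ENNReal.ofReal_lt_top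

lemma circleIntegral_eq_mu (g : ℂ → ℂ) (R : ℝ) :
    (∮ ξ in C(0, R), g ξ) = ∫ θ, (circleMap 0 R θ * I) • g (circleMap 0 R θ) ∂mu := by
  rw [circleIntegral]
  simp_rw [deriv_circleMap]
  rw [intervalIntegral.integral_of_le Real.two_pi_pos.le]
  rfl



/-- The double-Cauchy kernel. `p.1` is the angle of the `ζ` (second coordinate) circle of radius
`3/4`; `p.2` the angle of the `ξ` (first coordinate) circle of radius `ρ`. -/
noncomputable def KK (f : ℂ × ℂ → ℂ) (ρ : ℝ) (x : ℂ × ℂ) (p : ℝ × ℝ) : ℂ :=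
  (circleMap 0 (3/4) p.1 * I) • ((circleMap 0 (3/4) p.1 - x.2)⁻¹ •
    ((circleMap 0 ρ p.2 * I) • ((circleMap 0 ρ p.2 - x.1)⁻¹ •
      f (circleMap 0 ρ p.2, circleMap 0 (3/4) p.1))))

noncomputable def GG (f : ℂ × ℂ → ℂ) (ρ : ℝ) (x : ℂ × ℂ) : ℂ :=
  ((2 * π * I)⁻¹ * (2 * π * I)⁻¹) • ∫ p, KK f ρ x p ∂(mu.prod mu)

lemma torus_mem {ρ : ℝ} (hρ1 : 1/2 < ρ) (hρ2 : ρ < 1) (a b : ℝ) :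
    (circleMap 0 ρ b, circleMap 0 (3/4) a) ∈ Hs := by
  have h1 : ‖(circleMap 0 ρ b)‖ = ρ := by
    rw [norm_circleMap_zero, _root_.abs_of_pos (by linarith : (0:ℝ) < ρ)]
  have h2 : ‖(circleMap 0 (3/4) a)‖ = 3/4 := by
    rw [norm_circleMap_zero]; norm_num
  exact Or.inl ⟨by rw [h1]; exact hρ2, by rw [h2]; norm_num, by rw [h2]; norm_num⟩

lemma circle_sub_ne {R : ℝ} {c : ℂ} (h : ‖c‖ < R) (θ : ℝ) :
    circleMap 0 R θ - c ≠ 0 := by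
  intro hc
  rw [sub_eq_zero] at hc
  have : ‖(circleMap 0 R θ)‖ = |R| := norm_circleMap_zero R θ
  rw [hc] at this
  have hR : (0:ℝ) ≤ R := le_trans (norm_nonneg c) h.le
  rw [_root_.abs_of_nonneg hR] at this
  exact absurd this (ne_of_lt h)

lemma norm_circle_sub_inv_le {R : ℝ} {c : ℂ} {δ : ℝ} (hδ : 0 < δ)
    (h : ‖c‖ ≤ R - δ) (θ : ℝ) :
    ‖(circleMap 0 R θ - c)⁻¹‖ ≤ δ⁻¹ := by
  have hR : (0:ℝ) ≤ R := le_trans (norm_nonneg c) (by linarith)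
  have h1 : δ ≤ ‖circleMap 0 R θ - c‖ := by
    have h2 := norm_sub_norm_le (circleMap 0 R θ) c
    have h3 : ‖circleMap 0 R θ‖ = R := by
      rw [norm_circleMap_zero, _root_.abs_of_nonneg hR]
    rw [h3] at h2
    linarith
  rw [norm_inv]
  exact inv_anti₀ hδ h1

variable {f : ℂ × ℂ → ℂ}

lemma KK_cont (hf : DifferentiableOn ℂ f Hs) {ρ : ℝ} (hρ1 : 1/2 < ρ) (hρ2 : ρ < 1)
    {x : ℂ × ℂ} (hx1 : ‖x.1‖ < ρ) (hx2 : ‖x.2‖ < 3/4) :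
    Continuous (KK f ρ x) := by
  have cζ : Continuous fun p : ℝ × ℝ => circleMap 0 (3/4) p.1 :=
    (continuous_circleMap 0 (3/4)).comp continuous_fst
  have cξ : Continuous fun p : ℝ × ℝ => circleMap 0 ρ p.2 :=
    (continuous_circleMap 0 ρ).comp continuous_snd
  have cf : Continuous fun p : ℝ × ℝ => f (circleMap 0 ρ p.2, circleMap 0 (3/4) p.1) :=
    hf.continuousOn.comp_continuous (cξ.prodMk cζ) fun p => torus_mem hρ1 hρ2 p.1 p.2
  have cinv2 : Continuous fun p : ℝ × ℝ => (circleMap 0 (3/4) p.1 - x.2)⁻¹ :=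
    (cζ.sub continuous_const).inv₀ fun p => circle_sub_ne hx2 p.1
  have cinv1 : Continuous fun p : ℝ × ℝ => (circleMap 0 ρ p.2 - x.1)⁻¹ :=
    (cξ.sub continuous_const).inv₀ fun p => circle_sub_ne hx1 p.2
  exact (cζ.mul continuous_const).smul (cinv2.smul ((cξ.mul continuous_const).smul
    (cinv1.smul cf)))

lemma exists_M (hf : DifferentiableOn ℂ f Hs) {ρ : ℝ} (hρ1 : 1/2 < ρ) (hρ2 : ρ < 1) :
    ∃ M : ℝ, 0 ≤ M ∧ ∀ a b : ℝ, ‖f (circleMap 0 ρ b, circleMap 0 (3/4) a)‖ ≤ M := by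
  have hT : IsCompact (sphere (0:ℂ) ρ ×ˢ sphere (0:ℂ) (3/4)) :=
    (isCompact_sphere _ _).prod (isCompact_sphere _ _)
  have hTH : (sphere (0:ℂ) ρ ×ˢ sphere (0:ℂ) (3/4)) ⊆ Hs := by
    rintro ⟨u, v⟩ ⟨hu, hv⟩
    simp only [mem_sphere_iff_norm, sub_zero] at hu hv
    exact Or.inl ⟨by rw [hu]; linarith, by rw [hv]; norm_num, by rw [hv]; norm_num⟩
  obtain ⟨M, hM⟩ := hT.exists_bound_of_continuousOn (hf.continuousOn.mono hTH)
  refine ⟨max M 0, le_max_right _ _, fun a b => ?_⟩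
  refine le_trans (hM _ ⟨?_, ?_⟩) (le_max_left _ _)
  · simp [mem_sphere_iff_norm, norm_circleMap_zero,
      abs_of_pos (by linarith : (0:ℝ) < ρ)]
  · simp [mem_sphere_iff_norm, norm_circleMap_zero]
    norm_num

lemma KK_norm_le {ρ M : ℝ} (hρ0 : 0 < ρ) {x : ℂ × ℂ} {δ₁ δ₂ : ℝ} (hδ₁ : 0 < δ₁) (hδ₂ : 0 < δ₂)
    (h1 : ‖x.1‖ ≤ ρ - δ₁) (h2 : ‖x.2‖ ≤ 3/4 - δ₂)
    (hM : ∀ a b : ℝ, ‖f (circleMap 0 ρ b, circleMap 0 (3/4) a)‖ ≤ M) (p : ℝ × ℝ) :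
    ‖KK f ρ x p‖ ≤ 3/4 * (δ₂⁻¹ * (ρ * (δ₁⁻¹ * M))) := by
  have hM0 : 0 ≤ M := le_trans (norm_nonneg _) (hM 0 0)
  rw [KK, norm_smul, norm_smul, norm_smul, norm_smul]
  have e1 : ‖circleMap 0 (3/4) p.1 * I‖ = 3/4 := by
    simp [norm_circleMap_zero]; norm_num
  have e2 : ‖circleMap 0 ρ p.2 * I‖ = ρ := by
    simp [norm_circleMap_zero, abs_of_pos hρ0]
  rw [e1, e2]
  gcongr
  · exact norm_circle_sub_inv_le hδ₂ h2 p.1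
  · exact norm_circle_sub_inv_le hδ₁ h1 p.2
  · exact hM p.1 p.2

lemma KK_integrable (hf : DifferentiableOn ℂ f Hs) {ρ : ℝ} (hρ1 : 1/2 < ρ) (hρ2 : ρ < 1)
    {x : ℂ × ℂ} (hx1 : ‖x.1‖ < ρ) (hx2 : ‖x.2‖ < 3/4) :
    Integrable (KK f ρ x) (mu.prod mu) := by
  haveI : IsFiniteMeasure mu := by
    constructor
    simp only [mu, Measure.restrict_apply, MeasurableSet.univ, Set.univ_inter, Real.volume_Ioc]
    exact ENNReal.ofReal_lt_top
  obtain ⟨M, hM0, hM⟩ := exists_M hf hρ1 hρ2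
  refine Integrable.mono' (integrable_const (3/4 * ((3/4 - ‖x.2‖)⁻¹ *
    (ρ * ((ρ - ‖x.1‖)⁻¹ * M)))))
    (KK_cont hf hρ1 hρ2 hx1 hx2).aestronglyMeasurable (ae_of_all _ fun p => ?_)
  exact KK_norm_le (by linarith) (by linarith) (by linarith) (by linarith) (by linarith) hM p


lemma GG_repr (hf : DifferentiableOn ℂ f Hs) {ρ : ℝ} (hρ1 : 1/2 < ρ) (hρ2 : ρ < 1)
    {z w : ℂ} (hz : ‖z‖ < ρ) (hw : ‖w‖ < 3/4) :
    GG f ρ (z, w) = (2 * π * I)⁻¹ • ∮ ζ in C(0, 3/4), (ζ - w)⁻¹ • f (z, ζ) := by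
  have hint := KK_integrable hf hρ1 hρ2 (x := (z, w)) hz hw
  have habs : ∀ a : ℝ, ‖(circleMap 0 (3/4) a)‖ = 3/4 := by
    intro a; rw [norm_circleMap_zero]; norm_num
  have inner : ∀ a : ℝ, (∫ b, KK f ρ (z, w) (a, b) ∂mu) =
      (circleMap 0 (3/4) a * I) • ((circleMap 0 (3/4) a - w)⁻¹ •
        ((2 * π * I) • f (z, circleMap 0 (3/4) a))) := by
    intro a
    have : (∫ b, KK f ρ (z, w) (a, b) ∂mu) =
        (circleMap 0 (3/4) a * I) • ((circleMap 0 (3/4) a - w)⁻¹ •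
          ∫ b, (circleMap 0 ρ b * I) • ((circleMap 0 ρ b - z)⁻¹ •
            f (circleMap 0 ρ b, circleMap 0 (3/4) a)) ∂mu) := by
      rw [← integral_smul, ← integral_smul]; rfl
    rw [this, ← circleIntegral_eq_mu (fun ξ => (ξ - z)⁻¹ • f (ξ, circleMap 0 (3/4) a)) ρ]
    rw [cauchyZ hf hρ2 hz (by rw [habs a]; norm_num) (by rw [habs a]; norm_num)]
  have expand : GG f ρ (z, w) = ((2 * π * I)⁻¹ * (2 * π * I)⁻¹) •
      ∫ a, (∫ b, KK f ρ (z, w) (a, b) ∂mu) ∂mu := by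
    rw [GG, integral_prod _ hint]
  rw [expand]
  simp_rw [inner]
  have comm : ∀ a : ℝ, (circleMap 0 (3/4) a * I) • ((circleMap 0 (3/4) a - w)⁻¹ •
      ((2 * π * I) • f (z, circleMap 0 (3/4) a))) =
      (2 * π * I) • ((circleMap 0 (3/4) a * I) • ((circleMap 0 (3/4) a - w)⁻¹ •
        f (z, circleMap 0 (3/4) a))) := by
    intro a; simp only [smul_eq_mul]; ring
  simp_rw [comm]
  rw [integral_smul, ← circleIntegral_eq_mu (fun ζ => (ζ - w)⁻¹ • f (z, ζ)) (3/4)]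
  rw [smul_smul]
  congr 1
  field_simp

lemma GG_eq_f_inner (hf : DifferentiableOn ℂ f Hs) {ρ : ℝ} (hρ1 : 1/2 < ρ) (hρ2 : ρ < 1)
    {z w : ℂ} (hz : ‖z‖ < 1/2) (hw : ‖w‖ < 3/4) :
    GG f ρ (z, w) = f (z, w) := by
  rw [GG_repr hf hρ1 hρ2 (by linarith) hw, cauchyW hf hz hw, smul_smul,
    inv_mul_cancel₀ two_pi_I_ne_zero, one_smul]


set_option maxHeartbeats 1000000 in
lemma GG_diff (hf : DifferentiableOn ℂ f Hs) {ρ : ℝ} (hρ1 : 1/2 < ρ) (hρ2 : ρ < 1)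
    {x₀ : ℂ × ℂ} (h1 : ‖x₀.1‖ < ρ) (h2 : ‖x₀.2‖ < 3/4) :
    DifferentiableAt ℂ (GG f ρ) x₀ := by
  haveI : IsFiniteMeasure mu := by
    constructor
    simp only [mu, Measure.restrict_apply, MeasurableSet.univ, Set.univ_inter, Real.volume_Ioc]
    exact ENNReal.ofReal_lt_top
  obtain ⟨M, hM0, hM⟩ := exists_M hf hρ1 hρ2
  set δ₁ : ℝ := (ρ - ‖x₀.1‖)/2 with hδ₁def
  set δ₂ : ℝ := (3/4 - ‖x₀.2‖)/2 with hδ₂def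
  have hδ₁ : 0 < δ₁ := by rw [hδ₁def]; linarith
  have hδ₂ : 0 < δ₂ := by rw [hδ₂def]; linarith
  set ε : ℝ := min δ₁ δ₂ with hεdef
  have hε : 0 < ε := lt_min hδ₁ hδ₂
  have hball : ∀ x ∈ ball x₀ ε,
      ‖x.1‖ ≤ ρ - δ₁ ∧ ‖x.2‖ ≤ 3/4 - δ₂ := by
    intro x hx
    rw [mem_ball_iff_norm] at hx
    have k1 : ‖(x - x₀).1‖ ≤ ‖x - x₀‖ := norm_fst_le _
    have k2 : ‖(x - x₀).2‖ ≤ ‖x - x₀‖ := norm_snd_le _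
    have a1 : ‖(x.1 - x₀.1)‖ < δ₁ :=
      lt_of_le_of_lt (by simpa using k1)
        (lt_of_lt_of_le hx (min_le_left _ _))
    have a2 : ‖(x.2 - x₀.2)‖ < δ₂ :=
      lt_of_le_of_lt (by simpa using k2)
        (lt_of_lt_of_le hx (min_le_right _ _))
    have t1 : ‖x.1‖ ≤ ‖x₀.1‖ + ‖(x.1 - x₀.1)‖ := by
      simpa using norm_add_le x₀.1 (x.1 - x₀.1)
    have t2 : ‖x.2‖ ≤ ‖x₀.2‖ + ‖(x.2 - x₀.2)‖ := by
      simpa using norm_add_le x₀.2 (x.2 - x₀.2)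
    constructor
    · rw [hδ₁def]; rw [hδ₁def] at a1; linarith
    · rw [hδ₂def]; rw [hδ₂def] at a2; linarith
  set A : ℝ × ℝ → ℂ := fun p => (circleMap 0 (3/4) p.1 * I) * (circleMap 0 ρ p.2 * I) *
    f (circleMap 0 ρ p.2, circleMap 0 (3/4) p.1) with hAdef
  have KK_eq : ∀ (x : ℂ × ℂ) (p : ℝ × ℝ), KK f ρ x p =
      A p * ((circleMap 0 ρ p.2 - x.1)⁻¹ * (circleMap 0 (3/4) p.1 - x.2)⁻¹) := by
    intro x p; simp only [KK, hAdef, smul_eq_mul]; ring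
  have hAnorm : ∀ p : ℝ × ℝ, ‖A p‖ ≤ 3/4 * (ρ * M) := by
    intro p
    have e1 : ‖circleMap 0 (3/4) p.1 * I‖ = 3/4 := by
      rw [norm_mul, Complex.norm_I, mul_one, norm_circleMap_zero]
      norm_num
    have e2 : ‖circleMap 0 ρ p.2 * I‖ = ρ := by
      rw [norm_mul, Complex.norm_I, mul_one, norm_circleMap_zero,
        _root_.abs_of_pos (by linarith : (0:ℝ) < ρ)]
    have : ‖A p‖ = 3/4 * (ρ * ‖f (circleMap 0 ρ p.2, circleMap 0 (3/4) p.1)‖) := by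
      rw [hAdef]
      rw [norm_mul, norm_mul, e1, e2, mul_assoc]
    rw [this]
    have := hM p.1 p.2
    have hfn : (0:ℝ) ≤ ‖f (circleMap 0 ρ p.2, circleMap 0 (3/4) p.1)‖ := norm_nonneg _
    nlinarith
  set F' : (ℂ × ℂ) → (ℝ × ℝ) → (ℂ × ℂ) →L[ℂ] ℂ := fun x p =>
    A p • ((circleMap 0 ρ p.2 - x.1)⁻¹ •
        ((-((circleMap 0 (3/4) p.1 - x.2) ^ 2)⁻¹) • (-(ContinuousLinearMap.snd ℂ ℂ ℂ)))
      + (circleMap 0 (3/4) p.1 - x.2)⁻¹ •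
        ((-((circleMap 0 ρ p.2 - x.1) ^ 2)⁻¹) • (-(ContinuousLinearMap.fst ℂ ℂ ℂ)))) with hF'def
  have hdiff : ∀ p : ℝ × ℝ, ∀ x ∈ ball x₀ ε,
      HasFDerivAt (fun y => KK f ρ y p) (F' x p) x := by
    intro p x hx
    obtain ⟨hx1, hx2⟩ := hball x hx
    have hne1 : circleMap 0 ρ p.2 - x.1 ≠ 0 := circle_sub_ne (by linarith) p.2
    have hne2 : circleMap 0 (3/4) p.1 - x.2 ≠ 0 := circle_sub_ne (by linarith) p.1
    have h₁ : HasFDerivAt (fun y : ℂ × ℂ => circleMap 0 ρ p.2 - y.1)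
        (-(ContinuousLinearMap.fst ℂ ℂ ℂ)) x := (hasFDerivAt_fst).const_sub _
    have h₂ : HasFDerivAt (fun y : ℂ × ℂ => circleMap 0 (3/4) p.1 - y.2)
        (-(ContinuousLinearMap.snd ℂ ℂ ℂ)) x := (hasFDerivAt_snd).const_sub _
    have hu : HasFDerivAt (fun y : ℂ × ℂ => (circleMap 0 ρ p.2 - y.1)⁻¹)
        ((-((circleMap 0 ρ p.2 - x.1) ^ 2)⁻¹) • (-(ContinuousLinearMap.fst ℂ ℂ ℂ))) x :=
      (hasDerivAt_inv hne1).comp_hasFDerivAt x h₁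
    have hv : HasFDerivAt (fun y : ℂ × ℂ => (circleMap 0 (3/4) p.1 - y.2)⁻¹)
        ((-((circleMap 0 (3/4) p.1 - x.2) ^ 2)⁻¹) • (-(ContinuousLinearMap.snd ℂ ℂ ℂ))) x :=
      (hasDerivAt_inv hne2).comp_hasFDerivAt x h₂
    have hmul := (hu.mul hv).const_mul (A p)
    have heq : (fun y : ℂ × ℂ => KK f ρ y p) = fun y =>
        A p * ((circleMap 0 ρ p.2 - y.1)⁻¹ * (circleMap 0 (3/4) p.1 - y.2)⁻¹) :=
      funext fun y => KK_eq y p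
    rw [heq]
    exact hmul
  set B : ℝ := 3/4 * (ρ * M) * (δ₁⁻¹ * (δ₂⁻¹ * δ₂⁻¹) + δ₂⁻¹ * (δ₁⁻¹ * δ₁⁻¹)) with hBdef
  have hbound : ∀ p : ℝ × ℝ, ∀ x ∈ ball x₀ ε, ‖F' x p‖ ≤ B := by
    intro p x hx
    obtain ⟨hx1, hx2⟩ := hball x hx
    have ne1 : ‖(circleMap 0 ρ p.2 - x.1)⁻¹‖ ≤ δ₁⁻¹ := norm_circle_sub_inv_le hδ₁ hx1 p.2
    have ne2 : ‖(circleMap 0 (3/4) p.1 - x.2)⁻¹‖ ≤ δ₂⁻¹ := by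
      refine norm_circle_sub_inv_le hδ₂ ?_ p.1
      exact hx2
    have sq1 : ‖(-((circleMap 0 ρ p.2 - x.1) ^ 2)⁻¹ : ℂ)‖ ≤ δ₁⁻¹ * δ₁⁻¹ := by
      rw [norm_neg, ← inv_pow, norm_pow, sq]
      exact mul_le_mul ne1 ne1 (norm_nonneg _) (inv_pos.2 hδ₁).le
    have sq2 : ‖(-((circleMap 0 (3/4) p.1 - x.2) ^ 2)⁻¹ : ℂ)‖ ≤ δ₂⁻¹ * δ₂⁻¹ := by
      rw [norm_neg, ← inv_pow, norm_pow, sq]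
      exact mul_le_mul ne2 ne2 (norm_nonneg _) (inv_pos.2 hδ₂).le
    have hsnd : ‖(-(ContinuousLinearMap.snd ℂ ℂ ℂ))‖ ≤ 1 := by
      rw [norm_neg]; exact ContinuousLinearMap.norm_snd_le ℂ ℂ ℂ
    have hfst : ‖(-(ContinuousLinearMap.fst ℂ ℂ ℂ))‖ ≤ 1 := by
      rw [norm_neg]; exact ContinuousLinearMap.norm_fst_le ℂ ℂ ℂ
    have b1 : ‖(circleMap 0 ρ p.2 - x.1)⁻¹ •
        ((-((circleMap 0 (3/4) p.1 - x.2) ^ 2)⁻¹) • (-(ContinuousLinearMap.snd ℂ ℂ ℂ)))‖ ≤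
        δ₁⁻¹ * (δ₂⁻¹ * δ₂⁻¹) := by
      refine le_trans (ContinuousLinearMap.opNorm_smul_le _ _) ?_
      refine le_trans (mul_le_mul ne1 (le_trans (ContinuousLinearMap.opNorm_smul_le _ _)
        (mul_le_mul sq2 hsnd (norm_nonneg _) (by positivity))) (norm_nonneg _)
        (by positivity)) ?_
      nlinarith [inv_pos.2 hδ₁, inv_pos.2 hδ₂]
    have b2 : ‖(circleMap 0 (3/4) p.1 - x.2)⁻¹ •
        ((-((circleMap 0 ρ p.2 - x.1) ^ 2)⁻¹) • (-(ContinuousLinearMap.fst ℂ ℂ ℂ)))‖ ≤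
        δ₂⁻¹ * (δ₁⁻¹ * δ₁⁻¹) := by
      refine le_trans (ContinuousLinearMap.opNorm_smul_le _ _) ?_
      refine le_trans (mul_le_mul ne2 (le_trans (ContinuousLinearMap.opNorm_smul_le _ _)
        (mul_le_mul sq1 hfst (norm_nonneg _) (by positivity))) (norm_nonneg _)
        (by positivity)) ?_
      nlinarith [inv_pos.2 hδ₁, inv_pos.2 hδ₂]
    simp only [hF'def]
    refine le_trans (ContinuousLinearMap.opNorm_smul_le _ _) ?_
    refine le_trans (mul_le_mul (hAnorm p) (le_trans (norm_add_le _ _) (add_le_add b1 b2))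
      (norm_nonneg _) (by nlinarith : (0:ℝ) ≤ 3/4 * (ρ * M))) ?_
    rw [hBdef]
  have cζ : Continuous fun p : ℝ × ℝ => circleMap 0 (3/4) p.1 :=
    (continuous_circleMap 0 (3/4)).comp continuous_fst
  have cξ : Continuous fun p : ℝ × ℝ => circleMap 0 ρ p.2 :=
    (continuous_circleMap 0 ρ).comp continuous_snd
  have cf : Continuous fun p : ℝ × ℝ => f (circleMap 0 ρ p.2, circleMap 0 (3/4) p.1) :=
    hf.continuousOn.comp_continuous (cξ.prodMk cζ) fun p => torus_mem hρ1 hρ2 p.1 p.2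
  have cA : Continuous A := ((cζ.mul continuous_const).mul (cξ.mul continuous_const)).mul cf
  have cu : Continuous fun p : ℝ × ℝ => (circleMap 0 ρ p.2 - x₀.1)⁻¹ :=
    (cξ.sub continuous_const).inv₀ fun p => circle_sub_ne h1 p.2
  have cv : Continuous fun p : ℝ × ℝ => (circleMap 0 (3/4) p.1 - x₀.2)⁻¹ :=
    (cζ.sub continuous_const).inv₀ fun p => circle_sub_ne h2 p.1
  have cs1 : Continuous fun p : ℝ × ℝ => (-((circleMap 0 ρ p.2 - x₀.1) ^ 2)⁻¹ : ℂ) :=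
    (((cξ.sub continuous_const).pow 2).inv₀ fun p =>
      pow_ne_zero _ (circle_sub_ne h1 p.2)).neg
  have cs2 : Continuous fun p : ℝ × ℝ => (-((circleMap 0 (3/4) p.1 - x₀.2) ^ 2)⁻¹ : ℂ) :=
    (((cζ.sub continuous_const).pow 2).inv₀ fun p =>
      pow_ne_zero _ (circle_sub_ne h2 p.1)).neg
  have hF'_cont : Continuous (F' x₀) := by
    rw [hF'def]
    exact cA.smul ((cu.smul (cs2.smul continuous_const)).add (cv.smul (cs1.smul continuous_const)))
  have hF_meas : ∀ᶠ x in 𝓝 x₀, AEStronglyMeasurable (KK f ρ x) (mu.prod mu) := by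
    refine eventually_of_mem (ball_mem_nhds x₀ hε) fun x hx => ?_
    obtain ⟨hx1, hx2⟩ := hball x hx
    exact (KK_cont hf hρ1 hρ2 (by linarith) (by linarith)).aestronglyMeasurable
  have final := hasFDerivAt_integral_of_dominated_of_fderiv_le (ball_mem_nhds x₀ hε) hF_meas
    (KK_integrable hf hρ1 hρ2 h1 h2) hF'_cont.aestronglyMeasurable
    (ae_of_all _ hbound) (integrable_const B) (ae_of_all _ hdiff)
  exact (final.const_smul ((2 * (π:ℂ) * I)⁻¹ * (2 * (π:ℂ) * I)⁻¹)).differentiableAt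


lemma GG_eq_f_strip (hf : DifferentiableOn ℂ f Hs) {ρ : ℝ} (hρ1 : 1/2 < ρ) (hρ2 : ρ < 1)
    {z w : ℂ} (hz : ‖z‖ < ρ) (hw1 : 1/2 < ‖w‖)
    (hw2 : ‖w‖ < 3/4) : GG f ρ (z, w) = f (z, w) := by
  have hGdiff : DifferentiableOn ℂ (fun t : ℂ => GG f ρ (t, w)) (ball 0 ρ) := by
    intro t ht
    have h := GG_diff hf hρ1 hρ2 (x₀ := (t, w))
      (by simpa using mem_ball_zero_iff.1 ht) hw2
    exact (h.comp (f := fun t : ℂ => (t, w)) t (differentiableAt_id.prodMk (differentiableAt_const w))).differentiableWithinAt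
  have hfdiff : DifferentiableOn ℂ (fun t : ℂ => f (t, w)) (ball 0 ρ) :=
    (sliceZ hf hw1 (by norm_num [hw2]; linarith)).mono (ball_subset_ball hρ2.le)
  have hU : IsPreconnected (ball (0:ℂ) ρ) := (convex_ball _ _).isPreconnected
  have h0 : (0:ℂ) ∈ ball (0:ℂ) ρ := mem_ball_self (by linarith)
  have hev : (fun t : ℂ => GG f ρ (t, w)) =ᶠ[𝓝 (0:ℂ)] fun t : ℂ => f (t, w) := by
    filter_upwards [ball_mem_nhds (0:ℂ) (by norm_num : (0:ℝ) < 1/2)] with t ht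
    exact GG_eq_f_inner hf hρ1 hρ2
      (by simpa using mem_ball_zero_iff.1 ht) hw2
  exact (hGdiff.analyticOnNhd isOpen_ball).eqOn_of_preconnected_of_eventuallyEq
    (hfdiff.analyticOnNhd isOpen_ball) hU h0 hev
    (mem_ball_zero_iff.2 (by simpa using hz))

lemma GG_consistent (hf : DifferentiableOn ℂ f Hs) {ρ ρ' : ℝ}
    (hρ1 : 1/2 < ρ) (hρ2 : ρ < 1) (hρ1' : 1/2 < ρ') (hρ2' : ρ' < 1)
    {z w : ℂ} (hz : ‖z‖ < ρ) (hz' : ‖z‖ < ρ')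
    (hw : ‖w‖ < 3/4) : GG f ρ (z, w) = GG f ρ' (z, w) := by
  have hdiff : ∀ {σ : ℝ}, 1/2 < σ → σ < 1 → ‖z‖ < σ →
      DifferentiableOn ℂ (fun t : ℂ => GG f σ (z, t)) (ball 0 (3/4)) := by
    intro σ hσ1 hσ2 hσz t ht
    have h := GG_diff hf hσ1 hσ2 (x₀ := (z, t)) hσz
      (by simpa using mem_ball_zero_iff.1 ht)
    exact (h.comp t ((differentiableAt_const z).prodMk differentiableAt_id)).differentiableWithinAt
  have habs35 : ‖(3/5 : ℂ)‖ = 3/5 := by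
    rw [norm_div]
    simp
  have hNopen : IsOpen ({t : ℂ | 1/2 < ‖t‖} ∩ ball 0 (3/4)) :=
    (isOpen_lt continuous_const continuous_norm).inter isOpen_ball
  have hNmem : (3/5 : ℂ) ∈ {t : ℂ | 1/2 < ‖t‖} ∩ ball 0 (3/4) := by
    constructor
    · rw [Set.mem_setOf_eq, habs35]; norm_num
    · rw [mem_ball_zero_iff, habs35]; norm_num
  have hev : (fun t : ℂ => GG f ρ (z, t)) =ᶠ[𝓝 (3/5 : ℂ)] fun t : ℂ => GG f ρ' (z, t) := by
    filter_upwards [hNopen.mem_nhds hNmem] with t ht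
    have ht1 : 1/2 < ‖t‖ := ht.1
    have ht2 : ‖t‖ < 3/4 := by
      simpa using mem_ball_zero_iff.1 ht.2
    rw [GG_eq_f_strip hf hρ1 hρ2 hz ht1 ht2, GG_eq_f_strip hf hρ1' hρ2' hz' ht1 ht2]
  have h0 : (3/5 : ℂ) ∈ ball (0:ℂ) (3/4) := hNmem.2
  exact ((hdiff hρ1 hρ2 hz).analyticOnNhd isOpen_ball).eqOn_of_preconnected_of_eventuallyEq
    ((hdiff hρ1' hρ2' hz').analyticOnNhd isOpen_ball)
    (convex_ball _ _).isPreconnected h0 hev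
    (mem_ball_zero_iff.2 (by simpa using hw))

end Hartogs16

open Hartogs16 in
/-- Hartogs extension: every function holomorphic on the Hartogs figure H extends
holomorphically to the full bidisc Δ(0,1) × Δ(0,1). -/
theorem stmt_16 (f : ℂ × ℂ → ℂ)
    (hf : DifferentiableOn ℂ f
      ({p : ℂ × ℂ | ‖p.1‖ < 1 ∧ 1/2 < ‖p.2‖ ∧ ‖p.2‖ < 1} ∪
        {p : ℂ × ℂ | ‖p.1‖ < 1/2 ∧ ‖p.2‖ < 1})) :
    ∃ F : ℂ × ℂ → ℂ,
      DifferentiableOn ℂ F {p : ℂ × ℂ | ‖p.1‖ < 1 ∧ ‖p.2‖ < 1} ∧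
      ∀ p ∈ ({p : ℂ × ℂ | ‖p.1‖ < 1 ∧ 1/2 < ‖p.2‖ ∧ ‖p.2‖ < 1} ∪
        {p : ℂ × ℂ | ‖p.1‖ < 1/2 ∧ ‖p.2‖ < 1}), F p = f p := by
  have hfH : DifferentiableOn ℂ f Hs := hf
  set ρfun : ℂ → ℝ := fun t => (1 + max (1/2) (‖t‖))/2 with hρfun
  have hρa : ∀ t : ℂ, 1/2 < ρfun t := by
    intro t
    have := le_max_left (1/2 : ℝ) (‖t‖)
    rw [hρfun]; dsimp only; linarith
  have hρb : ∀ t : ℂ, ‖t‖ < 1 → ρfun t < 1 := by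
    intro t ht
    have : max (1/2 : ℝ) (‖t‖) < 1 := max_lt (by norm_num) ht
    rw [hρfun]; dsimp only; linarith
  have hρc : ∀ t : ℂ, ‖t‖ < 1 → ‖t‖ < ρfun t := by
    intro t ht
    have h1 := le_max_right (1/2 : ℝ) (‖t‖)
    have h2 : max (1/2 : ℝ) (‖t‖) < 1 := max_lt (by norm_num) ht
    rw [hρfun]; dsimp only; linarith
  refine ⟨fun p => if 1/2 < ‖p.2‖ then f p else GG f (ρfun p.1) p, ?_, ?_⟩
  · rintro p₀ ⟨hp1, hp2⟩
    by_cases hcase : 1/2 < ‖p₀.2‖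
    · have hopen : IsOpen {p : ℂ × ℂ | 1/2 < ‖p.2‖} :=
        isOpen_lt continuous_const (continuous_norm.comp continuous_snd)
      have hev : (fun p : ℂ × ℂ => if 1/2 < ‖p.2‖ then f p
          else GG f (ρfun p.1) p) =ᶠ[𝓝 p₀] f := by
        filter_upwards [hopen.mem_nhds hcase] with p hp
        exact if_pos hp
      have hfd : DifferentiableAt ℂ f p₀ :=
        hfH.differentiableAt (hs_open.mem_nhds (Or.inl ⟨hp1, hcase, hp2⟩))
      exact (hev.differentiableAt_iff.2 hfd).differentiableWithinAt
    · push_neg at hcase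
      have h₀1 : 1/2 < ρfun p₀.1 := hρa _
      have h₀2 : ρfun p₀.1 < 1 := hρb _ hp1
      have h₀3 : ‖p₀.1‖ < ρfun p₀.1 := hρc _ hp1
      have hopen : IsOpen {p : ℂ × ℂ | ‖p.1‖ < ρfun p₀.1 ∧ ‖p.2‖ < 3/4} :=
        (isOpen_lt (continuous_norm.comp continuous_fst) continuous_const).inter
          (isOpen_lt (continuous_norm.comp continuous_snd) continuous_const)
      have hmem : p₀ ∈ {p : ℂ × ℂ | ‖p.1‖ < ρfun p₀.1 ∧ ‖p.2‖ < 3/4} :=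
        ⟨h₀3, by linarith⟩
      have hev : (fun p : ℂ × ℂ => if 1/2 < ‖p.2‖ then f p
          else GG f (ρfun p.1) p) =ᶠ[𝓝 p₀] GG f (ρfun p₀.1) := by
        filter_upwards [hopen.mem_nhds hmem] with p hp
        by_cases hc : 1/2 < ‖p.2‖
        · rw [if_pos hc]
          exact (GG_eq_f_strip hfH h₀1 h₀2 hp.1 hc hp.2).symm
        · rw [if_neg hc]
          push_neg at hc
          have hp11 : ‖p.1‖ < 1 := lt_trans hp.1 h₀2
          exact GG_consistent hfH (hρa _) (hρb _ hp11) h₀1 h₀2 (hρc _ hp11) hp.1 hp.2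
      have hgd : DifferentiableAt ℂ (GG f (ρfun p₀.1)) p₀ :=
        GG_diff hfH h₀1 h₀2 h₀3 (by linarith)
      exact (hev.differentiableAt_iff.2 hgd).differentiableWithinAt
  · intro p hp
    by_cases hc : 1/2 < ‖p.2‖
    · simp only [if_pos hc]
    · have hp2 : ‖p.1‖ < 1/2 ∧ ‖p.2‖ < 1 := by
        rcases hp with h | h
        · exact absurd h.2.1 hc
        · exact h
      push_neg at hc
      simp only [if_neg (not_lt.2 hc)]
      exact GG_eq_f_inner hfH (hρa _) (hρb _ (by linarith [hp2.1])) hp2.1 (by linarith)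
end
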